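/- If (e_λ) is an approximate unit for the C*-algebra A(x,x) in a C*-category A, then for every a ∈ A(x,y), ‖a∘e_λ − a‖ → 0, and for every b ∈ A(w,x), ‖e_λ∘b − b‖ → 0. -/

import Mathlib

universe u u' v v'

open Filter Topology

/-- A (possibly non-unital) C*-category structure on a family of hom-spaces:
a category enriched in complex Banach spaces, with contractive composition and a
conjugate-linear involution satisfying the C*-identity and positivity of elements
of the form `a* ∘ a` (encoded via self-adjoint square roots). -/
class CStarCategory {Obj : Type u} (Hom : Obj → Obj → Type v)
    [∀ x y, NormedAddCommGroup (Hom x y)] [∀ x y, NormedSpace ℂ (Hom x y)]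
    [∀ x y, CompleteSpace (Hom x y)] : Type (max u v) where
  comp : ∀ {x y z : Obj}, Hom y z → Hom x y → Hom x z
  adj : ∀ {x y : Obj}, Hom x y → Hom y x
  comp_assoc : ∀ {w x y z : Obj} (f : Hom y z) (g : Hom x y) (h : Hom w x),
      comp (comp f g) h = comp f (comp g h)
  comp_add_left : ∀ {x y z : Obj} (f f' : Hom y z) (g : Hom x y),
      comp (f + f') g = comp f g + comp f' g
  comp_add_right : ∀ {x y z : Obj} (f : Hom y z) (g g' : Hom x y),
      comp f (g + g') = comp f g + comp f g'
  comp_smul_left : ∀ {x y z : Obj} (c : ℂ) (f : Hom y z) (g : Hom x y),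
      comp (c • f) g = c • comp f g
  comp_smul_right : ∀ {x y z : Obj} (c : ℂ) (f : Hom y z) (g : Hom x y),
      comp f (c • g) = c • comp f g
  norm_comp_le : ∀ {x y z : Obj} (f : Hom y z) (g : Hom x y), ‖comp f g‖ ≤ ‖f‖ * ‖g‖
  adj_adj : ∀ {x y : Obj} (f : Hom x y), adj (adj f) = f
  adj_add : ∀ {x y : Obj} (f g : Hom x y), adj (f + g) = adj f + adj g
  adj_smul : ∀ {x y : Obj} (c : ℂ) (f : Hom x y), adj (c • f) = (starRingEnd ℂ) c • adj f
  adj_comp : ∀ {x y z : Obj} (f : Hom y z) (g : Hom x y), adj (comp f g) = comp (adj g) (adj f)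
  norm_adj_comp_self : ∀ {x y : Obj} (a : Hom x y), ‖comp (adj a) a‖ = ‖a‖ * ‖a‖
  pos_adj_comp_self : ∀ {x y : Obj} (a : Hom x y),
      ∃ b : Hom x x, adj b = b ∧ comp (adj a) a = comp b b

infixl:70 " ⊛ " => CStarCategory.comp
postfix:max "†" => CStarCategory.adj

section CStarBasics

variable {Obj : Type u} {Hom : Obj → Obj → Type v}
  [∀ x y, NormedAddCommGroup (Hom x y)] [∀ x y, NormedSpace ℂ (Hom x y)]
  [∀ x y, CompleteSpace (Hom x y)] [CStarCategory Hom]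

/-- Positivity of an endomorphism in a C*-category: it is of the form `b* ∘ b`. -/
def IsPos {x : Obj} (s : Hom x x) : Prop :=
  ∃ (z : Obj) (b : Hom x z), s = (b†) ⊛ b

/-- An approximate unit for the C*-algebra `Hom x x`: a directed net of positive,
norm-bounded, increasing elements with `‖e_i ∘ c - c‖ → 0` for every `c`. -/
structure IsApproxUnit {ι : Type u'} [Preorder ι] {x : Obj} (e : ι → Hom x x) : Prop where
  nonempty : Nonempty ι
  directed : ∀ i j : ι, ∃ k, i ≤ k ∧ j ≤ k
  norm_le_one : ∀ i, ‖e i‖ ≤ 1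
  pos : ∀ i, IsPos (e i)
  mono : ∀ i j, i ≤ j → IsPos (e j - e i)
  tendsto : ∀ c : Hom x x, Tendsto (fun i => ‖(e i ⊛ c) - c‖) atTop (nhds 0)

end CStarBasics

/-- Unitality, as a property of a C*-category. -/
def IsUnitalCStarCat {Obj : Type u} (Hom : Obj → Obj → Type v)
    [∀ x y, NormedAddCommGroup (Hom x y)] [∀ x y, NormedSpace ℂ (Hom x y)]
    [∀ x y, CompleteSpace (Hom x y)] [CStarCategory Hom] : Prop :=
  ∀ x : Obj, ∃ e : Hom x x,
    (∀ {y : Obj} (a : Hom y x), e ⊛ a = a) ∧ (∀ {y : Obj} (b : Hom x y), b ⊛ e = b)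

/-- A right Hilbert module over a C*-category: a ℂ-linear functor into vector spaces
equipped with `Hom`-valued inner products; each fiber is a Banach space whose norm is
induced by the inner product. -/
structure HilbMod {Obj : Type u} (Hom : Obj → Obj → Type v)
    [∀ x y, NormedAddCommGroup (Hom x y)] [∀ x y, NormedSpace ℂ (Hom x y)]
    [∀ x y, CompleteSpace (Hom x y)] [CStarCategory Hom] : Type (max u (v + 1)) where
  carrier : Obj → Type v
  [nacg : ∀ x, NormedAddCommGroup (carrier x)]
  [nsp : ∀ x, NormedSpace ℂ (carrier x)]
  [cs : ∀ x, CompleteSpace (carrier x)]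
  smulA : ∀ {x w : Obj}, carrier x → Hom w x → carrier w
  inner : ∀ {y z : Obj}, carrier z → carrier y → Hom y z
  smulA_add_left : ∀ {x w : Obj} (e e' : carrier x) (a : Hom w x),
      smulA (e + e') a = smulA e a + smulA e' a
  smulA_add_right : ∀ {x w : Obj} (e : carrier x) (a a' : Hom w x),
      smulA e (a + a') = smulA e a + smulA e a'
  smulA_smul_left : ∀ {x w : Obj} (c : ℂ) (e : carrier x) (a : Hom w x),
      smulA (c • e) a = c • smulA e a
  smulA_smul_right : ∀ {x w : Obj} (c : ℂ) (e : carrier x) (a : Hom w x),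
      smulA e (c • a) = c • smulA e a
  smulA_comp : ∀ {x w v : Obj} (e : carrier x) (a : Hom w x) (b : Hom v w),
      smulA (smulA e a) b = smulA e (a ⊛ b)
  inner_add_left : ∀ {y z : Obj} (e e' : carrier z) (f : carrier y),
      inner (e + e') f = inner e f + inner e' f
  inner_add_right : ∀ {y z : Obj} (e : carrier z) (f f' : carrier y),
      inner e (f + f') = inner e f + inner e f'
  inner_smul_right : ∀ {y z : Obj} (c : ℂ) (e : carrier z) (f : carrier y),
      inner e (c • f) = c • inner e f
  adj_inner : ∀ {y z : Obj} (e : carrier z) (f : carrier y), (inner e f)† = inner f e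
  inner_smulA : ∀ {y z w : Obj} (e : carrier z) (f : carrier y) (a : Hom w y),
      inner e (smulA f a) = inner e f ⊛ a
  inner_self_pos : ∀ {x : Obj} (e : carrier x), ∃ (z : Obj) (b : Hom x z),
      inner e e = (b†) ⊛ b
  inner_self_eq_zero : ∀ {x : Obj} (e : carrier x), inner e e = 0 → e = 0
  norm_eq : ∀ {x : Obj} (e : carrier x), ‖e‖ = Real.sqrt ‖inner e e‖

attribute [instance] HilbMod.nacg HilbMod.nsp HilbMod.cs

section HilbModBasics

variable {Obj : Type u} {Hom : Obj → Obj → Type v}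
  [∀ x y, NormedAddCommGroup (Hom x y)] [∀ x y, NormedSpace ℂ (Hom x y)]
  [∀ x y, CompleteSpace (Hom x y)] [CStarCategory Hom]

theorem HilbMod.inner_zero_left (M : HilbMod Hom) {y z : Obj} (f : M.carrier y) :
    M.inner (0 : M.carrier z) f = 0 := by
  have h := M.inner_add_left (0 : M.carrier z) 0 f
  rw [add_zero] at h
  exact left_eq_add.mp h

theorem HilbMod.inner_zero_right (M : HilbMod Hom) {y z : Obj} (e : M.carrier z) :
    M.inner e (0 : M.carrier y) = 0 := by
  have h := M.inner_add_right e (0 : M.carrier y) 0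
  rw [add_zero] at h
  exact left_eq_add.mp h

theorem HilbMod.inner_smul_left (M : HilbMod Hom) {y z : Obj} (c : ℂ)
    (e : M.carrier z) (f : M.carrier y) :
    M.inner (c • e) f = (starRingEnd ℂ) c • M.inner e f := by
  have h : M.inner (c • e) f = (M.inner f (c • e))† := (M.adj_inner f (c • e)).symm
  rw [h, M.inner_smul_right, CStarCategory.adj_smul, M.adj_inner]

theorem HilbMod.inner_smulA_left (M : HilbMod Hom) {x y w : Obj}
    (f : M.carrier x) (a : Hom w x) (g : M.carrier y) :
    M.inner (M.smulA f a) g = (a†) ⊛ M.inner f g := by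
  have h : M.inner (M.smulA f a) g = (M.inner g (M.smulA f a))† :=
    (M.adj_inner g (M.smulA f a)).symm
  rw [h, M.inner_smulA, CStarCategory.adj_comp, M.adj_inner]

/-- A bounded adjointable operator between Hilbert modules over a C*-category,
encoded by a pair of adjoint maps. -/
structure HilbOp (M N : HilbMod Hom) : Type (max u v) where
  toFun : ∀ x, M.carrier x → N.carrier x
  adjFun : ∀ x, N.carrier x → M.carrier x
  adjoint_prop : ∀ {y z : Obj} (e : M.carrier z) (f : N.carrier y),
      N.inner (toFun z e) f = M.inner e (adjFun y f)

variable {M N P : HilbMod Hom}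

theorem HilbOp.ext' {T S : HilbOp M N} (h1 : ∀ z v, T.toFun z v = S.toFun z v)
    (h2 : ∀ z w, T.adjFun z w = S.adjFun z w) : T = S := by
  cases T with
  | mk tf af ap =>
    cases S with
    | mk tf' af' ap' =>
      have e1 : tf = tf' := funext fun z => funext fun v => h1 z v
      subst e1
      have e2 : af = af' := funext fun z => funext fun w => h2 z w
      subst e2
      rfl

/-- Composition of operators. -/
def HilbOp.comp (S : HilbOp N P) (T : HilbOp M N) : HilbOp M P where
  toFun z v := S.toFun z (T.toFun z v)
  adjFun z w := T.adjFun z (S.adjFun z w)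
  adjoint_prop e f := by rw [S.adjoint_prop, T.adjoint_prop]

/-- The identity operator. -/
def HilbOp.id (M : HilbMod Hom) : HilbOp M M where
  toFun _ v := v
  adjFun _ v := v
  adjoint_prop _ _ := rfl

/-- Adjoint (involution) of an operator. -/
def HilbOp.star (T : HilbOp M N) : HilbOp N M where
  toFun := T.adjFun
  adjFun := T.toFun
  adjoint_prop e f := by
    have h := congrArg CStarCategory.adj (T.adjoint_prop f e)
    rw [N.adj_inner, M.adj_inner] at h
    exact h.symm

instance : Zero (HilbOp M N) :=
  ⟨{ toFun := fun _ _ => 0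
     adjFun := fun _ _ => 0
     adjoint_prop := fun e f => by
       rw [HilbMod.inner_zero_left, HilbMod.inner_zero_right] }⟩

instance : Add (HilbOp M N) :=
  ⟨fun T S =>
    { toFun := fun z v => T.toFun z v + S.toFun z v
      adjFun := fun z w => T.adjFun z w + S.adjFun z w
      adjoint_prop := fun e f => by
        rw [N.inner_add_left, M.inner_add_right, T.adjoint_prop, S.adjoint_prop] }⟩

instance : SMul ℂ (HilbOp M N) :=
  ⟨fun c T =>
    { toFun := fun z v => c • T.toFun z v
      adjFun := fun z w => (starRingEnd ℂ) c • T.adjFun z w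
      adjoint_prop := fun e f => by
        rw [HilbMod.inner_smul_left, M.inner_smul_right, T.adjoint_prop] }⟩

instance : AddCommMonoid (HilbOp M N) where
  add_assoc T S R := HilbOp.ext' (fun z v => add_assoc _ _ _) (fun z w => add_assoc _ _ _)
  zero_add T := HilbOp.ext' (fun z v => zero_add _) (fun z w => zero_add _)
  add_zero T := HilbOp.ext' (fun z v => add_zero _) (fun z w => add_zero _)
  add_comm T S := HilbOp.ext' (fun z v => add_comm _ _) (fun z w => add_comm _ _)
  nsmul := nsmulRec

/-- The operator norm of an operator between Hilbert modules. -/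
noncomputable def opNorm (T : HilbOp M N) : ℝ :=
  sInf {C : ℝ | 0 ≤ C ∧ ∀ (z : Obj) (v : M.carrier z), ‖T.toFun z v‖ ≤ C * ‖v‖}

/-- The rank-one operator `θ^{f,e} : v ↦ f·⟨e,v⟩`. -/
def thetaOp {x : Obj} (f : N.carrier x) (e : M.carrier x) : HilbOp M N where
  toFun z v := N.smulA f (M.inner e v)
  adjFun z w := M.smulA e (N.inner f w)
  adjoint_prop v w := by
    rw [HilbMod.inner_smulA_left, M.adj_inner, M.inner_smulA]

/-- Compact operators: norm-limits of finite sums of rank-one operators. -/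
def IsCompactOp (T : HilbOp M N) : Prop :=
  ∀ ε : ℝ, 0 < ε → ∃ (n : ℕ) (w : Fin n → Obj) (f : ∀ i, N.carrier (w i))
    (e : ∀ i, M.carrier (w i)), ∀ (z : Obj) (v : M.carrier z),
      ‖T.toFun z v - ∑ i, N.smulA (f i) (M.inner (e i) v)‖ ≤ ε * ‖v‖

end HilbModBasics

/-- The representable right Hilbert module `h_x = Hom(-, x)`. -/
def repMod {Obj : Type u} (Hom : Obj → Obj → Type v)
    [∀ x y, NormedAddCommGroup (Hom x y)] [∀ x y, NormedSpace ℂ (Hom x y)]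
    [∀ x y, CompleteSpace (Hom x y)] [CStarCategory Hom] (x : Obj) : HilbMod Hom where
  carrier z := Hom z x
  smulA e a := e ⊛ a
  inner e f := (e†) ⊛ f
  smulA_add_left e e' a := CStarCategory.comp_add_left e e' a
  smulA_add_right e a a' := CStarCategory.comp_add_right e a a'
  smulA_smul_left c e a := CStarCategory.comp_smul_left c e a
  smulA_smul_right c e a := CStarCategory.comp_smul_right c e a
  smulA_comp e a b := CStarCategory.comp_assoc e a b
  inner_add_left e e' f := by
    show ((e + e')†) ⊛ f = ((e†) ⊛ f) + ((e'†) ⊛ f)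
    rw [CStarCategory.adj_add, CStarCategory.comp_add_left]
  inner_add_right e f f' := CStarCategory.comp_add_right _ f f'
  inner_smul_right c e f := CStarCategory.comp_smul_right c _ f
  adj_inner e f := by rw [CStarCategory.adj_comp, CStarCategory.adj_adj]
  inner_smulA e f a := (CStarCategory.comp_assoc _ f a).symm
  inner_self_pos e := ⟨x, e, rfl⟩
  inner_self_eq_zero := by
    intro z e h
    have h' : (e†) ⊛ e = 0 := h
    have h2 := CStarCategory.norm_adj_comp_self (Hom := Hom) e
    rw [h', norm_zero] at h2
    have h3 : ‖e‖ = 0 := by nlinarith [norm_nonneg e]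
    exact norm_eq_zero.mp h3
  norm_eq := by
    intro z e
    rw [CStarCategory.norm_adj_comp_self, Real.sqrt_mul_self (norm_nonneg e)]

section YonedaOps

variable {Obj : Type u} {Hom : Obj → Obj → Type v}
  [∀ x y, NormedAddCommGroup (Hom x y)] [∀ x y, NormedSpace ℂ (Hom x y)]
  [∀ x y, CompleteSpace (Hom x y)] [CStarCategory Hom]

/-- The operator `ε_m : h_x → M` sending `a` to `m·a`; its adjoint is `f ↦ ⟨m,f⟩`. -/
def epsOp {M : HilbMod Hom} {x : Obj} (m : M.carrier x) : HilbOp (repMod Hom x) M where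
  toFun z a := M.smulA m a
  adjFun z f := M.inner m f
  adjoint_prop a f := HilbMod.inner_smulA_left M m a f

/-- The Yoneda operator `h_x → h_y` given by postcomposition with `a : Hom x y`. -/
def yonedaOp {x y : Obj} (a : Hom x y) : HilbOp (repMod Hom x) (repMod Hom y) where
  toFun z b := a ⊛ b
  adjFun z c := (a†) ⊛ c
  adjoint_prop b c := by
    show ((a ⊛ b)†) ⊛ c = (b†) ⊛ ((a†) ⊛ c)
    exact (congrArg (fun t => t ⊛ c) (CStarCategory.adj_comp a b)).trans
      (CStarCategory.comp_assoc _ _ _)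

end YonedaOps

/-! For `c = a* ∘ a`, the C*-identity and the self-adjointness of `e` give
`‖a ∘ e − a‖² = ‖e ∘ (c ∘ e − c) − (c ∘ e − c)‖ ≤ 2 ‖e ∘ c − c‖` whenever `‖e‖ ≤ 1`, so the
right action of `e_λ` on `A(x,y)` is controlled by its action on the C*-algebra `A(x,x)`.
Taking adjoints turns the left action on `A(w,x)` into a right action on `A(x,w)`. -/

namespace CStarCategory

variable {Obj : Type u} {Hom : Obj → Obj → Type v}
  [∀ x y, NormedAddCommGroup (Hom x y)] [∀ x y, NormedSpace ℂ (Hom x y)]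
  [∀ x y, CompleteSpace (Hom x y)] [CStarCategory Hom]

theorem sub_comp {x y z : Obj} (f f' : Hom y z) (g : Hom x y) :
    (f - f') ⊛ g = f ⊛ g - f' ⊛ g :=
  (AddMonoidHom.mk' (· ⊛ g) fun f f' => comp_add_left f f' g).map_sub f f'

theorem comp_sub {x y z : Obj} (f : Hom y z) (g g' : Hom x y) :
    f ⊛ (g - g') = f ⊛ g - f ⊛ g' :=
  (AddMonoidHom.mk' (f ⊛ ·) (comp_add_right f)).map_sub g g'

theorem adj_sub {x y : Obj} (f g : Hom x y) : (f - g)† = f† - g† :=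
  (AddMonoidHom.mk' adj adj_add).map_sub f g

theorem norm_le_norm_adj {x y : Obj} (f : Hom x y) : ‖f‖ ≤ ‖f†‖ := by
  have h := norm_adj_comp_self f
  have := norm_comp_le (f†) f
  nlinarith [norm_nonneg f, norm_nonneg (f†)]

theorem norm_adj {x y : Obj} (f : Hom x y) : ‖f†‖ = ‖f‖ :=
  le_antisymm (by simpa only [adj_adj] using norm_le_norm_adj (f†)) (norm_le_norm_adj f)

theorem adj_comp_self_adj {x y : Obj} (a : Hom x y) : ((a†) ⊛ a)† = (a†) ⊛ a := by
  rw [adj_comp, adj_adj]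

theorem norm_comp_sub_eq_norm_sub_comp {x : Obj} {c e : Hom x x} (hc : c† = c) (he : e† = e) :
    ‖c ⊛ e - c‖ = ‖e ⊛ c - c‖ := by
  rw [← norm_adj (e ⊛ c - c), adj_sub, adj_comp, hc, he]

theorem adj_comp_self_of_comp_sub {x y : Obj} (a : Hom x y) {e : Hom x x} (he : e† = e) :
    ((a ⊛ e - a)†) ⊛ (a ⊛ e - a) =
      e ⊛ (((a†) ⊛ a) ⊛ e - (a†) ⊛ a) - (((a†) ⊛ a) ⊛ e - (a†) ⊛ a) := by
  simp only [adj_sub, adj_comp, he, sub_comp, comp_sub, comp_assoc]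
  abel

theorem norm_comp_sub_sq_le {x y : Obj} (a : Hom x y) {e : Hom x x} (he : e† = e)
    (he_le : ‖e‖ ≤ 1) : ‖a ⊛ e - a‖ ^ 2 ≤ 2 * ‖e ⊛ ((a†) ⊛ a) - (a†) ⊛ a‖ := by
  set c := (a†) ⊛ a
  have hce : ‖e ⊛ (c ⊛ e - c)‖ ≤ ‖c ⊛ e - c‖ :=
    (norm_comp_le _ _).trans (mul_le_of_le_one_left (norm_nonneg _) he_le)
  calc ‖a ⊛ e - a‖ ^ 2 = ‖e ⊛ (c ⊛ e - c) - (c ⊛ e - c)‖ := by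
        rw [sq, ← norm_adj_comp_self, adj_comp_self_of_comp_sub a he]
    _ ≤ ‖e ⊛ (c ⊛ e - c)‖ + ‖c ⊛ e - c‖ := norm_sub_le _ _
    _ ≤ 2 * ‖c ⊛ e - c‖ := by linarith
    _ = 2 * ‖e ⊛ c - c‖ := by
        rw [norm_comp_sub_eq_norm_sub_comp (adj_comp_self_adj a) he]

theorem tendsto_norm_comp_sub_of_tendsto {ι : Type*} {l : Filter ι} {x y : Obj}
    {e : ι → Hom x x} (he : ∀ i, (e i)† = e i) (he_le : ∀ i, ‖e i‖ ≤ 1) (a : Hom x y)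
    (hc : Tendsto (fun i => ‖e i ⊛ ((a†) ⊛ a) - (a†) ⊛ a‖) l (𝓝 0)) :
    Tendsto (fun i => ‖a ⊛ e i - a‖) l (𝓝 0) := by
  have hbound := by simpa only [mul_zero, Real.sqrt_zero] using (hc.const_mul 2).sqrt
  exact squeeze_zero (fun _ => norm_nonneg _)
    (fun i => Real.le_sqrt_of_sq_le (norm_comp_sub_sq_le a (he i) (he_le i))) hbound

end CStarCategory

section ApproxUnit

open CStarCategory

variable {Obj : Type u} {Hom : Obj → Obj → Type v}
  [∀ x y, NormedAddCommGroup (Hom x y)] [∀ x y, NormedSpace ℂ (Hom x y)]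
  [∀ x y, CompleteSpace (Hom x y)] [CStarCategory Hom]

theorem IsPos.adj_eq {x : Obj} {s : Hom x x} (hs : IsPos s) : s† = s := by
  obtain ⟨_, b, rfl⟩ := hs
  exact adj_comp_self_adj b

theorem IsApproxUnit.tendsto_norm_comp_sub {ι : Type u'} [Preorder ι] {x y : Obj}
    {e : ι → Hom x x} (h : IsApproxUnit e) (a : Hom x y) :
    Tendsto (fun i => ‖a ⊛ e i - a‖) atTop (𝓝 0) :=
  tendsto_norm_comp_sub_of_tendsto (fun i => (h.pos i).adj_eq) h.norm_le_one a (h.tendsto _)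

theorem IsApproxUnit.tendsto_norm_sub_comp {ι : Type u'} [Preorder ι] {x w : Obj}
    {e : ι → Hom x x} (h : IsApproxUnit e) (b : Hom w x) :
    Tendsto (fun i => ‖e i ⊛ b - b‖) atTop (𝓝 0) := by
  have hadj (i : ι) : ‖e i ⊛ b - b‖ = ‖(b†) ⊛ e i - b†‖ := by
    rw [← norm_adj (e i ⊛ b - b), adj_sub, adj_comp, (h.pos i).adj_eq]
  simpa only [hadj] using h.tendsto_norm_comp_sub (b†)

end ApproxUnit

/-- If `(e_i)` is an approximate unit for the C*-algebra `A(x,x)` in a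
C*-category `A`, then for every `a : A(x,y)` we have `‖a ∘ e_i − a‖ → 0`, and for every
`b : A(w,x)` we have `‖e_i ∘ b − b‖ → 0`. -/
theorem approx_unit_acts {Obj : Type u} {Hom : Obj → Obj → Type v}
    [∀ x y, NormedAddCommGroup (Hom x y)] [∀ x y, NormedSpace ℂ (Hom x y)]
    [∀ x y, CompleteSpace (Hom x y)] [CStarCategory Hom]
    {x : Obj} {ι : Type u'} [Preorder ι] (e : ι → Hom x x)
    (h : IsApproxUnit e) :
    (∀ {y : Obj} (a : Hom x y),
      Filter.Tendsto (fun i => ‖(a ⊛ e i) - a‖) Filter.atTop (nhds 0)) ∧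
    (∀ {w : Obj} (b : Hom w x),
      Filter.Tendsto (fun i => ‖(e i ⊛ b) - b‖) Filter.atTop (nhds 0)) :=
  ⟨h.tendsto_norm_comp_sub, h.tendsto_norm_sub_comp⟩
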